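/- Let A and B be dg-algebras over a ring of idempotents k, D a rank-1 type DD bimodule over (A, B), and N a rank-1 type AA bimodule over (B-dual side, A) all of whose structure maps with zero algebra inputs on at least one side vanish except possibly the pure differential, which is zero on N. Then the box tensor product N ⊠ D is a rank-1 type DA bimodule; if moreover every nonzero higher action of N takes at least one algebra input on each side, then (N ⊠ D) has δ¹₁ = 0 and hence corresponds to an A∞-morphism φ : A → A. -/

import Mathlib

/-!
STATEMENT 15: Let `A`, `B` be dg-algebras over `F₂`, `D` a rank-1 type DD bimodule
over `(A, B)` (structure map `δ¹(1) = ∑ᵢ αᵢ ⊗ 1 ⊗ βᵢ`), and `N` a rank-1 type AA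
bimodule over `(B, A)` (structure maps `m_{p,1,q} : B^{⊗p} ⊗ k ⊗ A^{⊗q} → k`), all
of whose structure maps with zero algebra inputs on at least one side vanish,
except possibly the pure differential `m_{0,1,0}`, which is zero.  Then the box
tensor product `N ⊠ D` — the rank-1 bimodule whose structure maps `δL` are obtained
by iterating `δ¹` of `D`, feeding the `B`-outputs into `N` together with the
incoming `A`-inputs, and multiplying the `A`-outputs — is a rank-1 type DA bimodule
over `(A, A)`, i.e. `δL` satisfies the type DA structure equations; and since every
nonzero higher action of `N` takes at least one algebra input on each side,
`(N ⊠ D)` has `δ¹₁ = 0` (so it corresponds to an `A∞`-morphism `φ : A → A`).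
-/

open scoped BigOperators

/-- Merge the `i`-th and `(i+1)`-st entries of an argument list by multiplying them. -/
def mergeAt {A : Type} [Mul A] {n : ℕ} (a : Fin (n + 1) → A) (i : Fin n) :
    Fin n → A := fun j =>
  if (j : ℕ) < (i : ℕ) then a ⟨(j : ℕ), by have := j.isLt; omega⟩
  else if (j : ℕ) = (i : ℕ) then
    a ⟨(j : ℕ), by have := j.isLt; omega⟩ * a ⟨(j : ℕ) + 1, by have := j.isLt; omega⟩
  else a ⟨(j : ℕ) + 1, by have := j.isLt; omega⟩


section
variable (A B : Type) [Ring A] [Ring B] [Algebra (ZMod 2) A] [Algebra (ZMod 2) B]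

/-- The type DA structure equations for a rank-1 type DA bimodule over `(A, A)`
with structure maps `δ n : A^{⊗n} → A` (`δ n` being `δ¹_{n+1}`). -/
def DAStructEq (dA : A →ₗ[ZMod 2] A)
    (δ : (n : ℕ) → MultilinearMap (ZMod 2) (fun _ : Fin n => A) A) : Prop :=
  ∀ (n : ℕ) (a : Fin n → A),
    (∑ k : Fin (n + 1),
        (δ (k : ℕ) fun j : Fin (k : ℕ) =>
            a ⟨(j : ℕ), by have := j.isLt; have := k.isLt; omega⟩)
          * (δ (n - (k : ℕ)) fun j : Fin (n - (k : ℕ)) =>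
              a ⟨(k : ℕ) + (j : ℕ), by have := j.isLt; omega⟩))
      + (∑ i : Fin n, δ n (Function.update a i (dA (a i))))
      + (∑ i : Fin (n - 1),
          δ (n - 1)
            (mergeAt (fun j : Fin ((n - 1) + 1) =>
              a ⟨(j : ℕ), by have := j.isLt; have := i.isLt; omega⟩) i))
      + dA (δ n a)
      = 0

/-- The type AA structure equations for a rank-1 type AA bimodule over `(B, A)`
with structure maps `m p q : B^{⊗p} ⊗ A^{⊗q} → F₂` (i.e. `m_{p,1,q}`). -/
def AAStructEq (dB : B →ₗ[ZMod 2] B) (dA : A →ₗ[ZMod 2] A)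
    (m : (p q : ℕ) → MultilinearMap (ZMod 2) (fun _ : Fin p => B)
          (MultilinearMap (ZMod 2) (fun _ : Fin q => A) (ZMod 2))) : Prop :=
  ∀ (p q : ℕ) (b : Fin p → B) (a : Fin q → A),
    -- compositions of two actions:
    (∑ i : Fin (p + 1), ∑ j : Fin (q + 1),
        (m (i : ℕ) (j : ℕ)
            (fun u : Fin (i : ℕ) =>
              b ⟨(u : ℕ), by have := u.isLt; have := i.isLt; omega⟩)
            (fun v : Fin (j : ℕ) =>
              a ⟨(v : ℕ), by have := v.isLt; have := j.isLt; omega⟩))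
          * (m (p - (i : ℕ)) (q - (j : ℕ))
              (fun u : Fin (p - (i : ℕ)) =>
                b ⟨(i : ℕ) + (u : ℕ), by have := u.isLt; omega⟩)
              (fun v : Fin (q - (j : ℕ)) =>
                a ⟨(j : ℕ) + (v : ℕ), by have := v.isLt; omega⟩)))
      -- differentials on the inputs:
      + (∑ i : Fin p, m p q (Function.update b i (dB (b i))) a)
      + (∑ j : Fin q, m p q b (Function.update a j (dA (a j))))
      -- multiplications of adjacent inputs:
      + (∑ i : Fin (p - 1),
          m (p - 1) q
            (mergeAt (fun u : Fin ((p - 1) + 1) =>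
              b ⟨(u : ℕ), by have := u.isLt; have := i.isLt; omega⟩) i) a)
      + (∑ j : Fin (q - 1),
          m p (q - 1) b
            (mergeAt (fun v : Fin ((q - 1) + 1) =>
              a ⟨(v : ℕ), by have := v.isLt; have := j.isLt; omega⟩) j))
      = 0

end

namespace S15

variable {A : Type} [Ring A] [Algebra (ZMod 2) A]
variable {B : Type} [Ring B] [Algebra (ZMod 2) B]

lemma add_self (x : A) : x + x = 0 := by
  rw [← two_smul (ZMod 2) x, show (2 : ZMod 2) = 0 by decide, zero_smul]

lemma char2_combine (x1 x2 x3 x4 x5 s1 s2 s3 s4 : A)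
    (e1 : s1 = x1) (e2 : s2 = x3) (e3 : s3 = x5)
    (k1 : x1 + x2 + x3 + x4 + x5 = 0) (k2 : x2 + x4 + s4 = 0) :
    s1 + s2 + s3 + s4 = 0 := by
  rw [e1, e2, e3]
  have h : x1 + x3 + x5 + s4
      = (x1 + x2 + x3 + x4 + x5) + (x2 + x4 + s4) - (x2 + x2) - (x4 + x4) := by abel
  rw [h, k1, k2, add_self x2, add_self x4]
  abel

lemma d_one (d : A →ₗ[ZMod 2] A) (hd : ∀ x y, d (x * y) = d x * y + x * d y) :
    d 1 = 0 := by
  have h := hd 1 1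
  simp only [mul_one, one_mul] at h
  exact (add_eq_right).1 h.symm

lemma ofFn_update {p : ℕ} (f : Fin p → A) (j : Fin p) (x : A) :
    List.ofFn (Function.update f j x) = (List.ofFn f).set (j : ℕ) x := by
  apply List.ext_getElem
  · simp
  · intro k h1 h2
    rw [List.getElem_ofFn, List.getElem_set]
    rw [Function.update_apply]
    have h3 : k < p := by simpa using h2
    by_cases hk : (j : ℕ) = k
    · rw [if_pos hk, if_pos (by exact Fin.ext hk.symm)]
    · rw [if_neg hk, if_neg (fun hc => hk (by rw [← hc]))]
      rw [List.getElem_ofFn]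

lemma prod_update {p : ℕ} (f : Fin p → A) (j : Fin p) (x : A) :
    (List.ofFn (Function.update f j x)).prod
      = ((List.ofFn f).take (j : ℕ)).prod * x * ((List.ofFn f).drop ((j : ℕ) + 1)).prod := by
  rw [ofFn_update, List.prod_set]
  rw [if_pos (by simp [j.isLt])]

lemma leibniz_ofFn (d : A →ₗ[ZMod 2] A) (hd : ∀ x y, d (x * y) = d x * y + x * d y) :
    ∀ {p : ℕ} (f : Fin p → A),
      d (List.ofFn f).prod = ∑ j : Fin p, (List.ofFn (Function.update f j (d (f j)))).prod := by
  intro p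
  induction p with
  | zero => intro f; simp [d_one d hd]
  | succ p ih =>
    intro f
    have hhead : (List.ofFn (Function.update f 0 (d (f 0)))).prod
        = d (f 0) * (List.ofFn fun i : Fin p => f i.succ).prod := by
      rw [List.ofFn_succ, List.prod_cons]
      have h1 : Function.update f 0 (d (f 0)) 0 = d (f 0) := Function.update_self _ _ _
      have h2 : (fun i : Fin p => Function.update f 0 (d (f 0)) i.succ)
          = fun i : Fin p => f i.succ :=
        funext fun i => Function.update_of_ne (Fin.succ_ne_zero i) _ _
      rw [h1, h2]
    have htail : ∀ k : Fin p, (List.ofFn (Function.update f k.succ (d (f k.succ)))).prod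
        = f 0 * (List.ofFn (Function.update (fun i : Fin p => f i.succ) k (d (f k.succ)))).prod := by
      intro k
      rw [List.ofFn_succ, List.prod_cons]
      have h1 : Function.update f k.succ (d (f k.succ)) 0 = f 0 :=
        Function.update_of_ne (Fin.succ_ne_zero k).symm _ _
      have h2 : (fun i : Fin p => Function.update f k.succ (d (f k.succ)) i.succ)
          = Function.update (fun i : Fin p => f i.succ) k (d (f k.succ)) := by
        funext u
        exact congrFun (Function.update_comp_eq_of_injective f (Fin.succ_injective p) k
          (d (f k.succ))) u
      rw [h1, h2]
    rw [List.ofFn_succ, List.prod_cons, hd, ih (fun i => f i.succ), Finset.mul_sum,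
      Fin.sum_univ_succ, hhead]
    congr 1
    exact Finset.sum_congr rfl fun k _ => (htail k).symm

lemma prod_mergeAt : ∀ {p : ℕ} (f : Fin (p + 1) → A) (j : Fin p),
    (List.ofFn (mergeAt f j)).prod = (List.ofFn f).prod := by
  intro p
  induction p with
  | zero => intro f j; exact j.elim0
  | succ p ih =>
    intro f j
    induction j using Fin.cases with
    | zero =>
      have h1 : mergeAt f 0 0 = f 0 * f 1 := by simp [mergeAt]
      have h2 : (fun k : Fin p => mergeAt f 0 k.succ) = fun k : Fin p => f k.succ.succ := by
        funext k
        simp only [mergeAt, Fin.val_succ, Fin.val_zero]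
        simp only [show ¬((k : ℕ) + 1 < 0) by omega, show ¬((k : ℕ) + 1 = 0) by omega, ↓reduceIte]
        rfl
      rw [List.ofFn_succ, List.prod_cons, List.ofFn_succ (f := f), List.prod_cons,
        List.ofFn_succ, List.prod_cons, ← mul_assoc, h1, h2, Fin.succ_zero_eq_one]
    | succ j =>
      have h1 : mergeAt f j.succ 0 = f 0 := by
        simp only [mergeAt, Fin.val_succ, Fin.val_zero]
        simp only [show 0 < (j : ℕ) + 1 by omega, ↓reduceIte]
        rfl
      have h2 : (fun k : Fin p => mergeAt f j.succ k.succ)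
          = mergeAt (fun k : Fin (p+1) => f k.succ) j := by
        funext k
        simp only [mergeAt, Fin.val_succ]
        by_cases hc1 : (k : ℕ) < (j : ℕ)
        · rw [if_pos (show (k : ℕ) + 1 < (j : ℕ) + 1 by omega), if_pos hc1]
          rfl
        · by_cases hc2 : (k : ℕ) = (j : ℕ)
          · rw [if_neg (show ¬((k : ℕ) + 1 < (j : ℕ) + 1) by omega),
              if_pos (show (k : ℕ) + 1 = (j : ℕ) + 1 by omega), if_neg hc1, if_pos hc2]
            rfl
          · rw [if_neg (show ¬((k : ℕ) + 1 < (j : ℕ) + 1) by omega),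
              if_neg (show ¬((k : ℕ) + 1 = (j : ℕ) + 1) by omega), if_neg hc1, if_neg hc2]
            rfl
      rw [List.ofFn_succ, List.prod_cons, List.ofFn_succ (f := f), List.prod_cons, h1, h2, ih]

lemma tri {M : Type*} [AddCommMonoid M] (g : ℕ → ℕ → M) :
    ∀ Q : ℕ, ∑ p ∈ Finset.range Q, ∑ u ∈ Finset.range (p + 1), g u (p - u)
      = ∑ u ∈ Finset.range Q, ∑ w ∈ Finset.range (Q - u), g u w := by
  intro Q
  induction Q with
  | zero => simp
  | succ Q ih =>
    have h1 : ∑ u ∈ Finset.range Q, ∑ w ∈ Finset.range (Q + 1 - u), g u w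
        = ∑ u ∈ Finset.range Q, ((∑ w ∈ Finset.range (Q - u), g u w) + g u (Q - u)) := by
      apply Finset.sum_congr rfl
      intro u hu
      have h : Q + 1 - u = (Q - u) + 1 := by
        have := Finset.mem_range.1 hu; omega
      rw [h, Finset.sum_range_succ]
    rw [Finset.sum_range_succ, ih,
      Finset.sum_range_succ (fun u => ∑ w ∈ Finset.range (Q + 1 - u), g u w) Q, h1,
      Finset.sum_add_distrib, Finset.sum_range_succ (fun u => g u (Q - u)) Q,
      show Q + 1 - Q = 1 by omega, Finset.sum_range_one, Nat.sub_self]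
    abel

lemma Tcongr {M : Type*} (T : (p : ℕ) → Fin (p + 1) → M) {p p' : ℕ} (h : p = p')
    (u : Fin (p + 1)) (u' : Fin (p' + 1)) (hu : (u : ℕ) = (u' : ℕ)) : T p u = T p' u' := by
  subst h
  rw [show u = u' from Fin.ext hu]

lemma key_reindex {M : Type*} [AddCommMonoid M] (P : ℕ)
    (T : (p : ℕ) → Fin (p + 1) → M) (U : ℕ → ℕ → M)
    (hTU : ∀ u w : ℕ, T (u + w) ⟨u, by omega⟩ = U u w)
    (hU0 : ∀ u w, P < u ∨ P < w → U u w = 0) :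
    ∑ p ∈ Finset.range (2 * P + 2), ∑ u : Fin (p + 1), T p u
      = ∑ u ∈ Finset.range (2 * P + 2), ∑ w ∈ Finset.range (2 * P + 2), U u w := by
  have step1 : ∀ p : ℕ, ∑ u : Fin (p + 1), T p u
      = ∑ u ∈ Finset.range (p + 1), U u (p - u) := by
    intro p
    rw [← Fin.sum_univ_eq_sum_range (fun u => U u (p - u)) (p + 1)]
    apply Finset.sum_congr rfl
    intro u _
    rw [← hTU (u : ℕ) (p - (u : ℕ))]
    exact Tcongr T (by have := u.isLt; omega) u _ rfl
  calc ∑ p ∈ Finset.range (2 * P + 2), ∑ u : Fin (p + 1), T p u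
      = ∑ p ∈ Finset.range (2 * P + 2), ∑ u ∈ Finset.range (p + 1), U u (p - u) :=
        Finset.sum_congr rfl fun p _ => step1 p
    _ = ∑ u ∈ Finset.range (2 * P + 2), ∑ w ∈ Finset.range (2 * P + 2 - u), U u w :=
        tri U (2 * P + 2)
    _ = ∑ u ∈ Finset.range (2 * P + 2), ∑ w ∈ Finset.range (2 * P + 2), U u w := by
        apply Finset.sum_congr rfl
        intro u hu
        by_cases hP : u ≤ P
        · apply Finset.sum_subset
          · intro w hw
            rw [Finset.mem_range] at *; omega
          · intro w _ hw
            rw [Finset.mem_range] at hw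
            exact hU0 u w (Or.inr (by omega))
        · rw [Finset.sum_eq_zero fun w _ => hU0 u w (Or.inl (by omega)),
            Finset.sum_eq_zero fun w _ => hU0 u w (Or.inl (by omega))]

lemma mapp_congr {A B : Type} [Ring A] [Ring B] [Algebra (ZMod 2) A] [Algebra (ZMod 2) B]
    (m : (p q : ℕ) → MultilinearMap (ZMod 2) (fun _ : Fin p => B)
          (MultilinearMap (ZMod 2) (fun _ : Fin q => A) (ZMod 2)))
    {p p' q q' : ℕ} (hp : p = p') (hq : q = q')
    (b : Fin p → B) (b' : Fin p' → B) (a : Fin q → A) (a' : Fin q' → A)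
    (hb : ∀ (k : ℕ) (h1 : k < p) (h2 : k < p'), b ⟨k, h1⟩ = b' ⟨k, h2⟩)
    (ha : ∀ (k : ℕ) (h1 : k < q) (h2 : k < q'), a ⟨k, h1⟩ = a' ⟨k, h2⟩) :
    m p q b a = m p' q' b' a' := by
  subst hp; subst hq
  have hb' : b = b' := funext fun k => hb k.1 k.2 k.2
  have ha' : a = a' := funext fun k => ha k.1 k.2 k.2
  rw [hb', ha']

def appEquiv (r p1 p2 : ℕ) : ((Fin p1 → Fin r) × (Fin p2 → Fin r)) ≃ (Fin (p1 + p2) → Fin r) where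
  toFun x k := if h : (k : ℕ) < p1 then x.1 ⟨k, h⟩
    else x.2 ⟨(k : ℕ) - p1, by have := k.isLt; omega⟩
  invFun i := (fun k => i ⟨k, by have := k.isLt; omega⟩,
    fun k => i ⟨p1 + k, by have := k.isLt; omega⟩)
  left_inv x := by
    obtain ⟨x1, x2⟩ := x
    refine Prod.ext (funext fun k => ?_) (funext fun k => ?_)
    · obtain ⟨kv, hk⟩ := k
      show (if h : kv < p1 then x1 ⟨kv, h⟩ else x2 ⟨kv - p1, by omega⟩) = x1 ⟨kv, hk⟩
      rw [dif_pos hk]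
    · obtain ⟨kv, hk⟩ := k
      show (if h : p1 + kv < p1 then x1 ⟨p1 + kv, h⟩ else x2 ⟨p1 + kv - p1, by omega⟩)
          = x2 ⟨kv, hk⟩
      rw [dif_neg (by omega)]
      exact congrArg x2 (Fin.ext (show p1 + kv - p1 = kv by omega))
  right_inv i := by
    funext k
    obtain ⟨kv, hk⟩ := k
    by_cases h : kv < p1
    · show (if h' : kv < p1 then i ⟨(⟨kv, h'⟩ : Fin p1), by omega⟩ else _) = i ⟨kv, hk⟩
      rw [dif_pos h]
    · show (if h' : kv < p1 then i ⟨(⟨kv, h'⟩ : Fin p1), by omega⟩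
          else i ⟨p1 + ((⟨kv - p1, by omega⟩ : Fin p2) : ℕ), by omega⟩) = i ⟨kv, hk⟩
      rw [dif_neg h]
      exact congrArg i (Fin.ext (show p1 + (kv - p1) = kv by omega))

lemma appEquiv_mk_left {r p1 p2 : ℕ} (x : (Fin p1 → Fin r) × (Fin p2 → Fin r))
    (k : ℕ) (h : k < p1) (h' : k < p1 + p2) :
    appEquiv r p1 p2 x ⟨k, h'⟩ = x.1 ⟨k, h⟩ := by
  show (if hh : k < p1 then x.1 ⟨k, hh⟩ else x.2 ⟨k - p1, by omega⟩) = x.1 ⟨k, h⟩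
  rw [dif_pos h]

lemma appEquiv_mk_right {r p1 p2 : ℕ} (x : (Fin p1 → Fin r) × (Fin p2 → Fin r))
    (k : ℕ) (h : k < p2) (h' : p1 + k < p1 + p2) :
    appEquiv r p1 p2 x ⟨p1 + k, h'⟩ = x.2 ⟨k, h⟩ := by
  show (if hh : p1 + k < p1 then x.1 ⟨p1 + k, hh⟩ else x.2 ⟨p1 + k - p1, by omega⟩)
      = x.2 ⟨k, h⟩
  rw [dif_neg (by omega)]
  exact congrArg x.2 (Fin.ext (show p1 + k - p1 = k by omega))

def insEquiv (r p : ℕ) (j : Fin p) : (Fin r × (Fin p → Fin r)) ≃ (Fin (p + 1) → Fin r) where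
  toFun x k := if h1 : (k : ℕ) < (j : ℕ) then x.2 ⟨k, by have := j.isLt; omega⟩
    else if h2 : (k : ℕ) = (j : ℕ) then x.1
    else x.2 ⟨(k : ℕ) - 1, by have := k.isLt; have := j.isLt; omega⟩
  invFun i := (i ⟨j, by have := j.isLt; omega⟩,
    fun k => if (k : ℕ) < (j : ℕ) then i ⟨k, by have := k.isLt; omega⟩
      else i ⟨(k : ℕ) + 1, by have := k.isLt; omega⟩)
  left_inv x := by
    obtain ⟨s, i⟩ := x
    refine Prod.ext ?_ (funext fun k => ?_)
    · show (if h1 : (j : ℕ) < (j : ℕ) then i ⟨(j : ℕ), by have := j.isLt; omega⟩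
          else if h2 : (j : ℕ) = (j : ℕ) then s
          else i ⟨(j : ℕ) - 1, by have := j.isLt; omega⟩) = s
      rw [dif_neg (by omega), dif_pos rfl]
    · obtain ⟨kv, hk⟩ := k
      show (if kv < (j : ℕ) then
            (if h1 : kv < (j : ℕ) then i ⟨kv, by omega⟩
              else if h2 : kv = (j : ℕ) then s
              else i ⟨kv - 1, by omega⟩)
          else
            (if h1 : kv + 1 < (j : ℕ) then i ⟨kv + 1, by omega⟩
              else if h2 : kv + 1 = (j : ℕ) then s
              else i ⟨kv + 1 - 1, by omega⟩)) = i ⟨kv, hk⟩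
      by_cases h : kv < (j : ℕ)
      · rw [if_pos h, dif_pos h]
      · rw [if_neg h, dif_neg (by omega), dif_neg (by omega)]
        exact congrArg i (Fin.ext (show kv + 1 - 1 = kv by omega))
  right_inv i := by
    funext k
    obtain ⟨kv, hk⟩ := k
    show (if h1 : kv < (j : ℕ) then
          (if (kv : ℕ) < (j : ℕ) then i ⟨kv, by omega⟩ else i ⟨kv + 1, by omega⟩)
        else if h2 : kv = (j : ℕ) then i ⟨(j : ℕ), by have := j.isLt; omega⟩
        else
          (if (kv - 1 : ℕ) < (j : ℕ) then i ⟨kv - 1, by omega⟩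
            else i ⟨kv - 1 + 1, by omega⟩)) = i ⟨kv, hk⟩
    by_cases h1 : kv < (j : ℕ)
    · rw [dif_pos h1, if_pos h1]
    · by_cases h2 : kv = (j : ℕ)
      · rw [dif_neg h1, dif_pos h2]
        exact congrArg i (Fin.ext (show (j : ℕ) = kv by omega))
      · rw [dif_neg h1, dif_neg h2, if_neg (by omega)]
        exact congrArg i (Fin.ext (show kv - 1 + 1 = kv by omega))

lemma insEquiv_mk {r p : ℕ} (j : Fin p) (x : Fin r × (Fin p → Fin r)) (k : ℕ) (hk : k < p + 1) :
    insEquiv r p j x ⟨k, hk⟩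
      = if h1 : k < (j : ℕ) then x.2 ⟨k, by have := j.isLt; omega⟩
        else if h2 : k = (j : ℕ) then x.1
        else x.2 ⟨k - 1, by have := j.isLt; omega⟩ := rfl

lemma mergeAt_insEquiv {M : Type} [Mul M] {r p : ℕ} (h : Fin r → M) (j : Fin p)
    (s : Fin r) (i : Fin p → Fin r) :
    mergeAt (fun u : Fin (p + 1) => h (insEquiv r p j (s, i) u)) j
      = Function.update (fun k => h (i k)) j (h s * h (i j)) := by
  funext k
  obtain ⟨kv, hk⟩ := k
  rw [Function.update_apply]
  show (if kv < (j : ℕ) then h (insEquiv r p j (s, i) ⟨kv, by omega⟩)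
      else if kv = (j : ℕ) then
        h (insEquiv r p j (s, i) ⟨kv, by omega⟩) * h (insEquiv r p j (s, i) ⟨kv + 1, by omega⟩)
      else h (insEquiv r p j (s, i) ⟨kv + 1, by omega⟩))
    = if (⟨kv, hk⟩ : Fin p) = j then h s * h (i j) else h (i ⟨kv, hk⟩)
  by_cases h1 : kv < (j : ℕ)
  · rw [if_pos h1, insEquiv_mk, dif_pos h1,
      if_neg (show (⟨kv, hk⟩ : Fin p) ≠ j from fun hh => by
        have h2 : kv = (j : ℕ) := congrArg Fin.val hh; omega)]
  · by_cases h2 : kv = (j : ℕ)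
    · rw [if_neg h1, if_pos h2, insEquiv_mk, insEquiv_mk, dif_neg h1, dif_pos h2,
        dif_neg (show ¬(kv + 1 < (j : ℕ)) by omega),
        dif_neg (show ¬(kv + 1 = (j : ℕ)) by omega),
        if_pos (show (⟨kv, hk⟩ : Fin p) = j from Fin.ext h2)]
      congr 1
      exact congrArg h (congrArg i (Fin.ext (show kv + 1 - 1 = (j : ℕ) by omega)))
    · rw [if_neg h1, if_neg h2, insEquiv_mk, dif_neg (show ¬(kv + 1 < (j : ℕ)) by omega),
        dif_neg (show ¬(kv + 1 = (j : ℕ)) by omega),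
        if_neg (show (⟨kv, hk⟩ : Fin p) ≠ j from fun hh => by
          have h3 : kv = (j : ℕ) := congrArg Fin.val hh; omega)]
      exact congrArg h (congrArg i (Fin.ext (show kv + 1 - 1 = kv by omega)))

lemma prod_append {r p1 p2 : ℕ} (α : Fin r → A) (i1 : Fin p1 → Fin r) (i2 : Fin p2 → Fin r) :
    (List.ofFn fun k : Fin (p1 + p2) => α (appEquiv r p1 p2 (i1, i2) k)).prod
      = (List.ofFn fun k => α (i1 k)).prod * (List.ofFn fun k => α (i2 k)).prod := by
  rw [List.ofFn_add, List.prod_append]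
  congr 1
  · refine congrArg List.prod (congrArg List.ofFn (funext fun k => ?_))
    rw [show Fin.castLE (Nat.le_add_right p1 p2) k = (⟨(k : ℕ), by have := k.isLt; omega⟩ : Fin (p1 + p2)) from
      Fin.ext rfl]
    rw [appEquiv_mk_left (i1, i2) (k : ℕ) k.isLt]
  · refine congrArg List.prod (congrArg List.ofFn (funext fun k => ?_))
    rw [show Fin.natAdd p1 k = (⟨p1 + (k : ℕ), by have := k.isLt; omega⟩ : Fin (p1 + p2)) from
      Fin.ext rfl]
    rw [appEquiv_mk_right (i1, i2) (k : ℕ) k.isLt]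

def Phi {p q : ℕ}
    (μ : MultilinearMap (ZMod 2) (fun _ : Fin p => B)
      (MultilinearMap (ZMod 2) (fun _ : Fin q => A) (ZMod 2)))
    (a : Fin q → A) (f : Fin p → A) (b : Fin p → B) (j : Fin p) :
    A →ₗ[ZMod 2] B →ₗ[ZMod 2] A :=
  LinearMap.mk₂ (ZMod 2)
    (fun x y => μ (Function.update b j y) a • (List.ofFn (Function.update f j x)).prod)
    (fun x1 x2 y => by
      rw [prod_update, prod_update, prod_update, mul_add, add_mul, smul_add])
    (fun c x y => by
      rw [prod_update, prod_update, mul_smul_comm, smul_mul_assoc, smul_comm])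
    (fun x y1 y2 => by
      rw [MultilinearMap.map_update_add, MultilinearMap.add_apply, add_smul])
    (fun c x y => by
      rw [MultilinearMap.map_update_smul, MultilinearMap.smul_apply, smul_assoc])

lemma Phi_apply {p q : ℕ}
    (μ : MultilinearMap (ZMod 2) (fun _ : Fin p => B)
      (MultilinearMap (ZMod 2) (fun _ : Fin q => A) (ZMod 2)))
    (a : Fin q → A) (f : Fin p → A) (b : Fin p → B) (j : Fin p) (x : A) (y : B) :
    Phi μ a f b j x y
      = μ (Function.update b j y) a • (List.ofFn (Function.update f j x)).prod := rfl

lemma Phi_update {p q : ℕ}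
    (μ : MultilinearMap (ZMod 2) (fun _ : Fin p => B)
      (MultilinearMap (ZMod 2) (fun _ : Fin q => A) (ZMod 2)))
    (a : Fin q → A) (f : Fin p → A) (b : Fin p → B) (j : Fin p) (x0 : A) (y0 : B) :
    Phi μ a (Function.update f j x0) (Function.update b j y0) j = Phi μ a f b j := by
  apply LinearMap.ext; intro x
  apply LinearMap.ext; intro y
  rw [Phi_apply, Phi_apply, Function.update_idem, Function.update_idem]

open scoped TensorProduct in
lemma Phi_hDD {p q rr : ℕ}
    (μ : MultilinearMap (ZMod 2) (fun _ : Fin p => B)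
      (MultilinearMap (ZMod 2) (fun _ : Fin q => A) (ZMod 2)))
    (a : Fin q → A) (f : Fin p → A) (b : Fin p → B) (j : Fin p)
    (α : Fin rr → A) (β : Fin rr → B) (dA : A →ₗ[ZMod 2] A) (dB : B →ₗ[ZMod 2] B)
    (hDD : (∑ s : Fin rr, ∑ t : Fin rr, (α s * α t) ⊗ₜ[ZMod 2] (β s * β t))
        + (∑ s : Fin rr, dA (α s) ⊗ₜ[ZMod 2] β s)
        + (∑ s : Fin rr, α s ⊗ₜ[ZMod 2] dB (β s)) = (0 : A ⊗[ZMod 2] B)) :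
    ∑ s : Fin rr, (Phi μ a f b j (α s) (dB (β s))
      + (∑ t : Fin rr, Phi μ a f b j (α t * α s) (β t * β s))
      + Phi μ a f b j (dA (α s)) (β s)) = 0 := by
  have h := congrArg (TensorProduct.lift (Phi μ a f b j)) hDD
  simp only [map_add, map_sum, TensorProduct.lift.tmul, map_zero] at h
  rw [Finset.sum_add_distrib, Finset.sum_add_distrib]
  rw [Finset.sum_comm (f := fun s t : Fin rr => Phi μ a f b j (α t * α s) (β t * β s))]
  rw [← h]
  abel

lemma sum_slot {M : Type*} [AddCommMonoid M] {p r : ℕ} (j : Fin p)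
    (H : (Fin p → Fin r) → Fin r → M)
    (hH : ∀ i t s, H (Function.update i j t) s = H i s)
    (h0 : ∀ i, ∑ s : Fin r, H i s = 0) :
    ∑ i : Fin p → Fin r, H i (i j) = 0 := by
  rcases r with _ | r'
  · exact Finset.sum_eq_zero fun i _ => (i j).elim0
  · have e := Equiv.piSplitAt j (fun _ : Fin p => Fin (r' + 1))
    rw [← Equiv.sum_comp (Equiv.piSplitAt j (fun _ : Fin p => Fin (r' + 1))).symm
      (fun i => H i (i j)), Fintype.sum_prod_type]
    have key : ∀ (sv : Fin (r' + 1)) (g : (k : { k : Fin p // k ≠ j }) → Fin (r' + 1)),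
        (Equiv.piSplitAt j (fun _ : Fin p => Fin (r' + 1))).symm (sv, g)
          = Function.update ((Equiv.piSplitAt j (fun _ : Fin p => Fin (r' + 1))).symm (0, g))
              j sv := by
      intro sv g
      funext k
      rw [Function.update_apply]
      by_cases hkj : k = j
      · subst hkj
        rw [if_pos rfl, Equiv.piSplitAt_symm_apply, dif_pos rfl]
      · rw [if_neg hkj, Equiv.piSplitAt_symm_apply, Equiv.piSplitAt_symm_apply,
          dif_neg hkj, dif_neg hkj]
    have key2 : ∀ (sv : Fin (r' + 1)) (g : (k : { k : Fin p // k ≠ j }) → Fin (r' + 1)),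
        (Equiv.piSplitAt j (fun _ : Fin p => Fin (r' + 1))).symm (sv, g) j = sv := by
      intro sv g
      rw [Equiv.piSplitAt_symm_apply, dif_pos rfl]
    calc ∑ sv : Fin (r' + 1), ∑ g, H ((Equiv.piSplitAt j (fun _ : Fin p => Fin (r' + 1))).symm
            (sv, g)) ((Equiv.piSplitAt j (fun _ : Fin p => Fin (r' + 1))).symm (sv, g) j)
        = ∑ sv : Fin (r' + 1), ∑ g, H ((Equiv.piSplitAt j
            (fun _ : Fin p => Fin (r' + 1))).symm (0, g)) sv := by
          refine Finset.sum_congr rfl fun sv _ => Finset.sum_congr rfl fun g _ => ?_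
          rw [key2, key sv g, hH]
      _ = ∑ g, ∑ sv : Fin (r' + 1), H ((Equiv.piSplitAt j
            (fun _ : Fin p => Fin (r' + 1))).symm (0, g)) sv := Finset.sum_comm
      _ = 0 := Finset.sum_eq_zero fun g _ => h0 _

lemma sum_rot3 {M : Type*} [AddCommMonoid M] {γ1 γ2 γ3 : Type*}
    (s : Finset γ1) (t : Finset γ2) (u : Finset γ3) (f : γ1 → γ2 → γ3 → M) :
    (∑ x ∈ s, ∑ y ∈ t, ∑ z ∈ u, f x y z) = ∑ z ∈ u, ∑ x ∈ s, ∑ y ∈ t, f x y z :=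
  (Finset.sum_congr rfl fun _ _ => Finset.sum_comm).trans Finset.sum_comm

lemma shift_sum {M : Type*} [AddCommMonoid M] (Q : ℕ) (h g : ℕ → M)
    (h0 : h 0 = 0) (htop : g Q = 0) (hcorr : ∀ p, h (p + 1) = g p) :
    ∑ p ∈ Finset.range (Q + 1), h p = ∑ p ∈ Finset.range (Q + 1), g p := by
  rw [Finset.sum_range_succ', h0, add_zero, Finset.sum_range_succ, htop, add_zero]
  exact Finset.sum_congr rfl fun p _ => hcorr p

lemma Phi_zero {p q : ℕ}
    (a : Fin q → A) (f : Fin p → A) (b : Fin p → B) (j : Fin p) (x : A) (y : B) :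
    Phi (0 : MultilinearMap (ZMod 2) (fun _ : Fin p => B)
      (MultilinearMap (ZMod 2) (fun _ : Fin q => A) (ZMod 2))) a f b j x y = 0 := by
  rw [Phi_apply, MultilinearMap.zero_apply, MultilinearMap.zero_apply, zero_smul]

end S15

section
variable (A B : Type) [Ring A] [Ring B] [Algebra (ZMod 2) A] [Algebra (ZMod 2) B]

set_option maxHeartbeats 2000000 in
open scoped TensorProduct in
theorem stmt_15 (dA : A →ₗ[ZMod 2] A) (dB : B →ₗ[ZMod 2] B)
    -- `A` and `B` are dg-algebras:
    (hdA2 : ∀ a, dA (dA a) = 0) (hLeibA : ∀ a b, dA (a * b) = dA a * b + a * dA b)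
    (hdB2 : ∀ b, dB (dB b) = 0) (hLeibB : ∀ a b, dB (a * b) = dB a * b + a * dB b)
    -- the rank-1 type DD bimodule `D` over `(A, B)`: `δ¹(1) = ∑ i, α i ⊗ 1 ⊗ β i`:
    (r : ℕ) (α : Fin r → A) (β : Fin r → B)
    -- the type DD structure equation for `D`:
    (hDD : (∑ i : Fin r, ∑ j : Fin r, (α i * α j) ⊗ₜ[ZMod 2] (β i * β j))
        + (∑ i : Fin r, dA (α i) ⊗ₜ[ZMod 2] β i)
        + (∑ i : Fin r, α i ⊗ₜ[ZMod 2] dB (β i)) = (0 : A ⊗[ZMod 2] B))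
    -- the rank-1 type AA bimodule `N` over `(B, A)`:
    (m : (p q : ℕ) → MultilinearMap (ZMod 2) (fun _ : Fin p => B)
          (MultilinearMap (ZMod 2) (fun _ : Fin q => A) (ZMod 2)))
    (hAA : AAStructEq A B dB dA m)
    -- all structure maps of `N` with zero algebra inputs on at least one side
    -- vanish (in particular the pure differential `m 0 0` is zero):
    (hvanish : ∀ p q : ℕ, p = 0 ∨ q = 0 → m p q = 0)
    -- operational boundedness, so that the box tensor product is defined:
    (P : ℕ) (hbd : ∀ p q : ℕ, P < p → m p q = 0)
    -- `δL` is the structure map of the box tensor product `N ⊠ D`: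
    (δL : (n : ℕ) → MultilinearMap (ZMod 2) (fun _ : Fin n => A) A)
    (hδL : ∀ q : ℕ,
      δL q = ∑ p ∈ Finset.range (P + 1), ∑ i : Fin p → Fin r,
        MultilinearMap.smulRight ((m p q) fun j => β (i j))
          ((List.ofFn fun j => α (i j)).prod)) :
    -- then `N ⊠ D` is a rank-1 type DA bimodule over `(A, A)` …
    DAStructEq A dA δL ∧
    -- … with `δ¹₁ = 0`, hence corresponds to an `A∞`-morphism `φ : A → A`:
    δL 0 = 0 := by
  constructor
  · intro n a
    have hδ : ∀ (q : ℕ) (x : Fin q → A), δL q x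
        = ∑ p ∈ Finset.range (2 * P + 2), ∑ i : Fin p → Fin r,
            m p q (fun j => β (i j)) x • (List.ofFn fun j => α (i j)).prod := by
      intro q x
      rw [hδL q]
      simp only [MultilinearMap.sum_apply, MultilinearMap.smulRight_apply]
      apply Finset.sum_subset (Finset.range_subset_range.2 (by omega))
      intro p _ hp
      refine Finset.sum_eq_zero fun i _ => ?_
      rw [hbd p q (by rw [Finset.mem_range] at hp; omega)]
      simp
    have e1 : (∑ k : Fin (n + 1),
        (δL (k : ℕ) fun j : Fin (k : ℕ) =>
            a ⟨(j : ℕ), by have := j.isLt; have := k.isLt; omega⟩)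
          * (δL (n - (k : ℕ)) fun j : Fin (n - (k : ℕ)) =>
              a ⟨(k : ℕ) + (j : ℕ), by have := j.isLt; omega⟩)) = (∑ p ∈ Finset.range (2 * P + 2), ∑ i : Fin p → Fin r, ∑ u : Fin (p + 1), ∑ v : Fin (n + 1),
        (m (u : ℕ) (v : ℕ)
            (fun k : Fin (u : ℕ) => β (i ⟨(k : ℕ), by have := k.isLt; have := u.isLt; omega⟩))
            (fun k : Fin (v : ℕ) => a ⟨(k : ℕ), by have := k.isLt; have := v.isLt; omega⟩)
          * m (p - (u : ℕ)) (n - (v : ℕ))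
            (fun k : Fin (p - (u : ℕ)) => β (i ⟨(u : ℕ) + (k : ℕ), by have := k.isLt; omega⟩))
            (fun k : Fin (n - (v : ℕ)) => a ⟨(v : ℕ) + (k : ℕ), by have := k.isLt; omega⟩))
          • (List.ofFn fun j => α (i j)).prod) := by
      calc (∑ k : Fin (n + 1),
        (δL (k : ℕ) fun j : Fin (k : ℕ) =>
            a ⟨(j : ℕ), by have := j.isLt; have := k.isLt; omega⟩)
          * (δL (n - (k : ℕ)) fun j : Fin (n - (k : ℕ)) =>
              a ⟨(k : ℕ) + (j : ℕ), by have := j.isLt; omega⟩))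
          = ∑ v : Fin (n + 1), ∑ p1 ∈ Finset.range (2 * P + 2), ∑ i1 : Fin p1 → Fin r,
            ∑ p2 ∈ Finset.range (2 * P + 2), ∑ i2 : Fin p2 → Fin r,
            (m p1 (v : ℕ) (fun k => β (i1 k))
                (fun k : Fin (v : ℕ) => a ⟨(k : ℕ), by have := k.isLt; have := v.isLt; omega⟩)
              * m p2 (n - (v : ℕ)) (fun k => β (i2 k))
                (fun k : Fin (n - (v : ℕ)) => a ⟨(v : ℕ) + (k : ℕ), by have := k.isLt; omega⟩))
              • ((List.ofFn fun k => α (i1 k)).prod * (List.ofFn fun k => α (i2 k)).prod) := by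
            refine Finset.sum_congr rfl fun v _ => ?_
            rw [hδ, hδ, Finset.sum_mul]
            refine Finset.sum_congr rfl fun p1 _ => ?_
            rw [Finset.sum_mul]
            refine Finset.sum_congr rfl fun i1 _ => ?_
            rw [Finset.mul_sum]
            refine Finset.sum_congr rfl fun p2 _ => ?_
            rw [Finset.mul_sum]
            refine Finset.sum_congr rfl fun i2 _ => ?_
            rw [smul_mul_assoc, mul_smul_comm, smul_smul]
        _ = ∑ u ∈ Finset.range (2 * P + 2), ∑ w ∈ Finset.range (2 * P + 2),
            ∑ v : Fin (n + 1), ∑ i1 : Fin u → Fin r, ∑ i2 : Fin w → Fin r,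
            (m u (v : ℕ) (fun k => β (i1 k))
                (fun k : Fin (v : ℕ) => a ⟨(k : ℕ), by have := k.isLt; have := v.isLt; omega⟩)
              * m w (n - (v : ℕ)) (fun k => β (i2 k))
                (fun k : Fin (n - (v : ℕ)) => a ⟨(v : ℕ) + (k : ℕ), by have := k.isLt; omega⟩))
              • ((List.ofFn fun k => α (i1 k)).prod * (List.ofFn fun k => α (i2 k)).prod) := by
            rw [Finset.sum_comm]
            exact Finset.sum_congr rfl fun p1 _ => S15.sum_rot3 _ _ _ _
        _ = ∑ p ∈ Finset.range (2 * P + 2), ∑ u : Fin (p + 1),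
            ∑ v : Fin (n + 1), ∑ i : Fin p → Fin r,
            (m (u : ℕ) (v : ℕ)
                (fun k : Fin (u : ℕ) =>
                  β (i ⟨(k : ℕ), by have := k.isLt; have := u.isLt; omega⟩))
                (fun k : Fin (v : ℕ) => a ⟨(k : ℕ), by have := k.isLt; have := v.isLt; omega⟩)
              * m (p - (u : ℕ)) (n - (v : ℕ))
                (fun k : Fin (p - (u : ℕ)) =>
                  β (i ⟨(u : ℕ) + (k : ℕ), by have := k.isLt; omega⟩))
                (fun k : Fin (n - (v : ℕ)) =>
                  a ⟨(v : ℕ) + (k : ℕ), by have := k.isLt; omega⟩))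
              • (List.ofFn fun j => α (i j)).prod := by
            refine (S15.key_reindex P
              (fun p u =>
              ∑ v : Fin (n + 1), ∑ i : Fin p → Fin r,
              (m (u : ℕ) (v : ℕ)
                  (fun k : Fin (u : ℕ) =>
                    β (i ⟨(k : ℕ), by have := k.isLt; have := u.isLt; omega⟩))
                  (fun k : Fin (v : ℕ) => a ⟨(k : ℕ), by have := k.isLt; have := v.isLt; omega⟩)
                * m (p - (u : ℕ)) (n - (v : ℕ))
                  (fun k : Fin (p - (u : ℕ)) =>
                    β (i ⟨(u : ℕ) + (k : ℕ), by have := k.isLt; omega⟩))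
                  (fun k : Fin (n - (v : ℕ)) =>
                    a ⟨(v : ℕ) + (k : ℕ), by have := k.isLt; omega⟩))
                • (List.ofFn fun j => α (i j)).prod)
              (fun u w =>
              ∑ v : Fin (n + 1), ∑ i1 : Fin u → Fin r, ∑ i2 : Fin w → Fin r,
              (m u (v : ℕ) (fun k => β (i1 k))
                  (fun k : Fin (v : ℕ) => a ⟨(k : ℕ), by have := k.isLt; have := v.isLt; omega⟩)
                * m w (n - (v : ℕ)) (fun k => β (i2 k))
                  (fun k : Fin (n - (v : ℕ)) => a ⟨(v : ℕ) + (k : ℕ), by have := k.isLt; omega⟩))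
                • ((List.ofFn fun k => α (i1 k)).prod * (List.ofFn fun k => α (i2 k)).prod))
              ?_ ?_).symm
            · intro u w
              show (∑ v : Fin (n + 1), ∑ i : Fin (u + w) → Fin r,
                  (m u (v : ℕ)
                      (fun k : Fin u => β (i ⟨(k : ℕ), by have := k.isLt; omega⟩))
                      (fun k : Fin (v : ℕ) =>
                        a ⟨(k : ℕ), by have := k.isLt; have := v.isLt; omega⟩)
                    * m (u + w - u) (n - (v : ℕ))
                      (fun k : Fin (u + w - u) =>
                        β (i ⟨u + (k : ℕ), by have := k.isLt; omega⟩))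
                      (fun k : Fin (n - (v : ℕ)) =>
                        a ⟨(v : ℕ) + (k : ℕ), by have := k.isLt; omega⟩))
                    • (List.ofFn fun j => α (i j)).prod)
                = (∑ v : Fin (n + 1), ∑ i1 : Fin u → Fin r, ∑ i2 : Fin w → Fin r,
                (m u (v : ℕ) (fun k => β (i1 k))
                    (fun k : Fin (v : ℕ) => a ⟨(k : ℕ), by have := k.isLt; have := v.isLt; omega⟩)
                  * m w (n - (v : ℕ)) (fun k => β (i2 k))
                    (fun k : Fin (n - (v : ℕ)) => a ⟨(v : ℕ) + (k : ℕ), by have := k.isLt; omega⟩))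
                  • ((List.ofFn fun k => α (i1 k)).prod * (List.ofFn fun k => α (i2 k)).prod))
              refine Finset.sum_congr rfl fun v _ => ?_
              rw [← Equiv.sum_comp (S15.appEquiv r u w) (fun i : Fin (u + w) → Fin r =>
                (m u (v : ℕ)
                    (fun k : Fin u => β (i ⟨(k : ℕ), by have := k.isLt; omega⟩))
                    (fun k : Fin (v : ℕ) =>
                      a ⟨(k : ℕ), by have := k.isLt; have := v.isLt; omega⟩)
                  * m (u + w - u) (n - (v : ℕ))
                    (fun k : Fin (u + w - u) =>
                      β (i ⟨u + (k : ℕ), by have := k.isLt; omega⟩))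
                    (fun k : Fin (n - (v : ℕ)) =>
                      a ⟨(v : ℕ) + (k : ℕ), by have := k.isLt; omega⟩))
                  • (List.ofFn fun j => α (i j)).prod), Fintype.sum_prod_type]
              refine Finset.sum_congr rfl fun i1 _ => Finset.sum_congr rfl fun i2 _ => ?_
              have h1 : (fun k : Fin u => β (S15.appEquiv r u w (i1, i2)
                  ⟨(k : ℕ), by have := k.isLt; omega⟩)) = fun k => β (i1 k) :=
                funext fun k => congrArg β (S15.appEquiv_mk_left (i1, i2) (k : ℕ) k.isLt
                  (by have := k.isLt; omega))
              have h2 : m (u + w - u) (n - (v : ℕ))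
                  (fun k : Fin (u + w - u) => β (S15.appEquiv r u w (i1, i2)
                    ⟨u + (k : ℕ), by have := k.isLt; omega⟩))
                  (fun k : Fin (n - (v : ℕ)) =>
                    a ⟨(v : ℕ) + (k : ℕ), by have := k.isLt; omega⟩)
                = m w (n - (v : ℕ)) (fun k => β (i2 k))
                  (fun k : Fin (n - (v : ℕ)) =>
                    a ⟨(v : ℕ) + (k : ℕ), by have := k.isLt; omega⟩) := by
                refine S15.mapp_congr m (by omega) rfl _ _ _ _ ?_ ?_
                · intro kv hk1 hk2
                  exact congrArg β (S15.appEquiv_mk_right (i1, i2) kv hk2 (by omega))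
                · intro kv hk1 hk2
                  rfl
              rw [h1, h2, S15.prod_append α i1 i2]
            · intro u w hc
              refine Finset.sum_eq_zero fun v _ => Finset.sum_eq_zero fun i1 _ =>
                Finset.sum_eq_zero fun i2 _ => ?_
              rcases hc with h | h
              · rw [hbd u (v : ℕ) h]
                simp
              · rw [hbd w (n - (v : ℕ)) h]
                simp
        _ = (∑ p ∈ Finset.range (2 * P + 2), ∑ i : Fin p → Fin r, ∑ u : Fin (p + 1), ∑ v : Fin (n + 1),
        (m (u : ℕ) (v : ℕ)
            (fun k : Fin (u : ℕ) => β (i ⟨(k : ℕ), by have := k.isLt; have := u.isLt; omega⟩))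
            (fun k : Fin (v : ℕ) => a ⟨(k : ℕ), by have := k.isLt; have := v.isLt; omega⟩)
          * m (p - (u : ℕ)) (n - (v : ℕ))
            (fun k : Fin (p - (u : ℕ)) => β (i ⟨(u : ℕ) + (k : ℕ), by have := k.isLt; omega⟩))
            (fun k : Fin (n - (v : ℕ)) => a ⟨(v : ℕ) + (k : ℕ), by have := k.isLt; omega⟩))
          • (List.ofFn fun j => α (i j)).prod) := Finset.sum_congr rfl fun p _ => S15.sum_rot3 _ _ _ _
    have e2 : (∑ j : Fin n, δL n (Function.update a j (dA (a j)))) = (∑ p ∈ Finset.range (2 * P + 2), ∑ i : Fin p → Fin r, ∑ j : Fin n,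
        m p n (fun k => β (i k)) (Function.update a j (dA (a j)))
          • (List.ofFn fun j => α (i j)).prod) := by
      simp only [hδ]
      rw [Finset.sum_comm]
      exact Finset.sum_congr rfl fun p _ => Finset.sum_comm
    have e3 : (∑ j : Fin (n - 1),
        δL (n - 1) (mergeAt (fun v : Fin ((n - 1) + 1) =>
          a ⟨(v : ℕ), by have := v.isLt; have := j.isLt; omega⟩) j)) = (∑ p ∈ Finset.range (2 * P + 2), ∑ i : Fin p → Fin r, ∑ j : Fin (n - 1),
        m p (n - 1) (fun k => β (i k)) (mergeAt (fun v : Fin ((n - 1) + 1) =>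
            a ⟨(v : ℕ), by have := v.isLt; have := j.isLt; omega⟩) j)
          • (List.ofFn fun j => α (i j)).prod) := by
      simp only [hδ]
      rw [Finset.sum_comm]
      exact Finset.sum_congr rfl fun p _ => Finset.sum_comm
    have key1 : (∑ p ∈ Finset.range (2 * P + 2), ∑ i : Fin p → Fin r, ∑ u : Fin (p + 1), ∑ v : Fin (n + 1),
        (m (u : ℕ) (v : ℕ)
            (fun k : Fin (u : ℕ) => β (i ⟨(k : ℕ), by have := k.isLt; have := u.isLt; omega⟩))
            (fun k : Fin (v : ℕ) => a ⟨(k : ℕ), by have := k.isLt; have := v.isLt; omega⟩)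
          * m (p - (u : ℕ)) (n - (v : ℕ))
            (fun k : Fin (p - (u : ℕ)) => β (i ⟨(u : ℕ) + (k : ℕ), by have := k.isLt; omega⟩))
            (fun k : Fin (n - (v : ℕ)) => a ⟨(v : ℕ) + (k : ℕ), by have := k.isLt; omega⟩))
          • (List.ofFn fun j => α (i j)).prod) + (∑ p ∈ Finset.range (2 * P + 2), ∑ i : Fin p → Fin r, ∑ j : Fin p,
        m p n (Function.update (fun k => β (i k)) j (dB (β (i j)))) a
          • (List.ofFn fun j => α (i j)).prod) + (∑ p ∈ Finset.range (2 * P + 2), ∑ i : Fin p → Fin r, ∑ j : Fin n,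
        m p n (fun k => β (i k)) (Function.update a j (dA (a j)))
          • (List.ofFn fun j => α (i j)).prod) + (∑ p ∈ Finset.range (2 * P + 2), ∑ i : Fin p → Fin r, ∑ j : Fin (p - 1),
        m (p - 1) n (mergeAt (fun u : Fin ((p - 1) + 1) =>
            β (i ⟨(u : ℕ), by have := u.isLt; have := j.isLt; omega⟩)) j) a
          • (List.ofFn fun j => α (i j)).prod) + (∑ p ∈ Finset.range (2 * P + 2), ∑ i : Fin p → Fin r, ∑ j : Fin (n - 1),
        m p (n - 1) (fun k => β (i k)) (mergeAt (fun v : Fin ((n - 1) + 1) =>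
            a ⟨(v : ℕ), by have := v.isLt; have := j.isLt; omega⟩) j)
          • (List.ofFn fun j => α (i j)).prod) = 0 := by
      calc (∑ p ∈ Finset.range (2 * P + 2), ∑ i : Fin p → Fin r, ∑ u : Fin (p + 1), ∑ v : Fin (n + 1),
        (m (u : ℕ) (v : ℕ)
            (fun k : Fin (u : ℕ) => β (i ⟨(k : ℕ), by have := k.isLt; have := u.isLt; omega⟩))
            (fun k : Fin (v : ℕ) => a ⟨(k : ℕ), by have := k.isLt; have := v.isLt; omega⟩)
          * m (p - (u : ℕ)) (n - (v : ℕ))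
            (fun k : Fin (p - (u : ℕ)) => β (i ⟨(u : ℕ) + (k : ℕ), by have := k.isLt; omega⟩))
            (fun k : Fin (n - (v : ℕ)) => a ⟨(v : ℕ) + (k : ℕ), by have := k.isLt; omega⟩))
          • (List.ofFn fun j => α (i j)).prod) + (∑ p ∈ Finset.range (2 * P + 2), ∑ i : Fin p → Fin r, ∑ j : Fin p,
        m p n (Function.update (fun k => β (i k)) j (dB (β (i j)))) a
          • (List.ofFn fun j => α (i j)).prod) + (∑ p ∈ Finset.range (2 * P + 2), ∑ i : Fin p → Fin r, ∑ j : Fin n,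
        m p n (fun k => β (i k)) (Function.update a j (dA (a j)))
          • (List.ofFn fun j => α (i j)).prod) + (∑ p ∈ Finset.range (2 * P + 2), ∑ i : Fin p → Fin r, ∑ j : Fin (p - 1),
        m (p - 1) n (mergeAt (fun u : Fin ((p - 1) + 1) =>
            β (i ⟨(u : ℕ), by have := u.isLt; have := j.isLt; omega⟩)) j) a
          • (List.ofFn fun j => α (i j)).prod) + (∑ p ∈ Finset.range (2 * P + 2), ∑ i : Fin p → Fin r, ∑ j : Fin (n - 1),
        m p (n - 1) (fun k => β (i k)) (mergeAt (fun v : Fin ((n - 1) + 1) =>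
            a ⟨(v : ℕ), by have := v.isLt; have := j.isLt; omega⟩) j)
          • (List.ofFn fun j => α (i j)).prod)
          = ∑ p ∈ Finset.range (2 * P + 2), ∑ i : Fin p → Fin r,
            ((∑ u : Fin (p + 1), ∑ v : Fin (n + 1),
            (m (u : ℕ) (v : ℕ)
                (fun k : Fin (u : ℕ) => β (i ⟨(k : ℕ), by have := k.isLt; have := u.isLt; omega⟩))
                (fun k : Fin (v : ℕ) => a ⟨(k : ℕ), by have := k.isLt; have := v.isLt; omega⟩))
              * (m (p - (u : ℕ)) (n - (v : ℕ))
                (fun k : Fin (p - (u : ℕ)) => β (i ⟨(u : ℕ) + (k : ℕ), by have := k.isLt; omega⟩))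
                (fun k : Fin (n - (v : ℕ)) => a ⟨(v : ℕ) + (k : ℕ), by have := k.isLt; omega⟩)))
          + (∑ j : Fin p, m p n (Function.update (fun k => β (i k)) j (dB (β (i j)))) a)
          + (∑ j : Fin n, m p n (fun k => β (i k)) (Function.update a j (dA (a j))))
          + (∑ j : Fin (p - 1),
              m (p - 1) n (mergeAt (fun u : Fin ((p - 1) + 1) =>
                β (i ⟨(u : ℕ), by have := u.isLt; have := j.isLt; omega⟩)) j) a)
          + (∑ j : Fin (n - 1),
              m p (n - 1) (fun k => β (i k)) (mergeAt (fun v : Fin ((n - 1) + 1) =>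
                a ⟨(v : ℕ), by have := v.isLt; have := j.isLt; omega⟩) j)))
          • (List.ofFn fun j => α (i j)).prod := by
            simp only [add_smul, Finset.sum_smul, Finset.sum_add_distrib]
        _ = 0 := Finset.sum_eq_zero fun p _ => Finset.sum_eq_zero fun i _ => by
            rw [hAA p n (fun k => β (i k)) a, zero_smul]
    have key2 : (∑ p ∈ Finset.range (2 * P + 2), ∑ i : Fin p → Fin r, ∑ j : Fin p,
        m p n (Function.update (fun k => β (i k)) j (dB (β (i j)))) a
          • (List.ofFn fun j => α (i j)).prod) + (∑ p ∈ Finset.range (2 * P + 2), ∑ i : Fin p → Fin r, ∑ j : Fin (p - 1),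
        m (p - 1) n (mergeAt (fun u : Fin ((p - 1) + 1) =>
            β (i ⟨(u : ℕ), by have := u.isLt; have := j.isLt; omega⟩)) j) a
          • (List.ofFn fun j => α (i j)).prod) + dA (δL n a) = 0 := by
      have hS4 : dA (δL n a)
          = ∑ p ∈ Finset.range (2 * P + 2), ∑ i : Fin p → Fin r, ∑ j : Fin p,
              m p n (fun k => β (i k)) a
                • (List.ofFn (Function.update (fun k => α (i k)) j (dA (α (i j))))).prod := by
        rw [hδ n a, map_sum]
        refine Finset.sum_congr rfl fun p _ => ?_
        rw [map_sum]
        refine Finset.sum_congr rfl fun i _ => ?_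
        rw [map_smul, S15.leibniz_ofFn dA hLeibA (fun k => α (i k)), Finset.smul_sum]
      have hS4' : dA (δL n a)
          = ∑ p ∈ Finset.range (2 * P + 2), ∑ j : Fin p, ∑ i : Fin p → Fin r,
              S15.Phi (m p n) a (fun k => α (i k)) (fun k => β (i k)) j (dA (α (i j))) (β (i j)) := by
        rw [hS4]
        refine Finset.sum_congr rfl fun p _ => ?_
        rw [Finset.sum_comm]
        refine Finset.sum_congr rfl fun j _ => Finset.sum_congr rfl fun i _ => ?_
        rw [S15.Phi_apply, Function.update_eq_self]
      have hX2' : (∑ p ∈ Finset.range (2 * P + 2), ∑ i : Fin p → Fin r, ∑ j : Fin p,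
            m p n (Function.update (fun k => β (i k)) j (dB (β (i j)))) a
              • (List.ofFn fun j => α (i j)).prod)
          = ∑ p ∈ Finset.range (2 * P + 2), ∑ j : Fin p, ∑ i : Fin p → Fin r,
              S15.Phi (m p n) a (fun k => α (i k)) (fun k => β (i k)) j (α (i j)) (dB (β (i j))) := by
        refine Finset.sum_congr rfl fun p _ => ?_
        rw [Finset.sum_comm]
        refine Finset.sum_congr rfl fun j _ => Finset.sum_congr rfl fun i _ => ?_
        rw [S15.Phi_apply, Function.update_eq_self]
      have hX4' : (∑ p ∈ Finset.range (2 * P + 2), ∑ i : Fin p → Fin r, ∑ j : Fin (p - 1),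
            m (p - 1) n (mergeAt (fun u : Fin ((p - 1) + 1) =>
                β (i ⟨(u : ℕ), by have := u.isLt; have := j.isLt; omega⟩)) j) a
              • (List.ofFn fun j => α (i j)).prod)
          = ∑ p ∈ Finset.range (2 * P + 2), ∑ j : Fin p, ∑ i : Fin p → Fin r, ∑ s : Fin r,
              S15.Phi (m p n) a (fun k => α (i k)) (fun k => β (i k)) j (α s * α (i j)) (β s * β (i j)) := by
        refine S15.shift_sum (2 * P + 1) _ _ ?_ ?_ ?_
        · refine Finset.sum_eq_zero fun i _ => ?_
          exact Fin.sum_univ_zero _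
        · refine Finset.sum_eq_zero fun j _ => Finset.sum_eq_zero fun i _ =>
            Finset.sum_eq_zero fun s _ => ?_
          rw [hbd (2 * P + 1) n (by omega)]
          exact S15.Phi_zero a _ _ j _ _
        · intro p
          show (∑ i : Fin (p + 1) → Fin r, ∑ j : Fin p,
              m p n (mergeAt (fun u : Fin (p + 1) => β (i u)) j) a
                • (List.ofFn fun k => α (i k)).prod)
            = ∑ j : Fin p, ∑ i : Fin p → Fin r, ∑ s : Fin r,
                S15.Phi (m p n) a (fun k => α (i k)) (fun k => β (i k)) j (α s * α (i j)) (β s * β (i j))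
          rw [Finset.sum_comm]
          refine Finset.sum_congr rfl fun j _ => ?_
          rw [← Equiv.sum_comp (S15.insEquiv r p j) (fun i : Fin (p + 1) → Fin r =>
            m p n (mergeAt (fun u : Fin (p + 1) => β (i u)) j) a
              • (List.ofFn fun k => α (i k)).prod), Fintype.sum_prod_type]
          rw [Finset.sum_comm]
          refine Finset.sum_congr rfl fun i _ => Finset.sum_congr rfl fun s _ => ?_
          rw [S15.Phi_apply, S15.mergeAt_insEquiv β j s i,
            ← S15.prod_mergeAt (fun k : Fin (p + 1) => α (S15.insEquiv r p j (s, i) k)) j,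
            S15.mergeAt_insEquiv α j s i]
      rw [hX2', hX4', hS4']
      simp only [← Finset.sum_add_distrib]
      refine Finset.sum_eq_zero fun p _ => Finset.sum_eq_zero fun j _ => ?_
      refine S15.sum_slot j (fun i s =>
        S15.Phi (m p n) a (fun k => α (i k)) (fun k => β (i k)) j (α s) (dB (β s))
          + (∑ t : Fin r, S15.Phi (m p n) a (fun k => α (i k)) (fun k => β (i k)) j
              (α t * α s) (β t * β s))
          + S15.Phi (m p n) a (fun k => α (i k)) (fun k => β (i k)) j (dA (α s)) (β s))
        ?_ ?_
      · intro i t s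
        have hα : (fun k => α (Function.update i j t k))
            = Function.update (fun k => α (i k)) j (α t) := by
          funext k
          rw [Function.update_apply, Function.update_apply]
          split_ifs <;> rfl
        have hβ : (fun k => β (Function.update i j t k))
            = Function.update (fun k => β (i k)) j (β t) := by
          funext k
          rw [Function.update_apply, Function.update_apply]
          split_ifs <;> rfl
        rw [hα, hβ, S15.Phi_update]
      · intro i
        exact S15.Phi_hDD (m p n) a (fun k => α (i k)) (fun k => β (i k)) j α β dA dB hDD
    exact S15.char2_combine _ _ _ _ _ _ _ _ _ e1 e2 e3 key1 key2
  · rw [hδL 0]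
    refine Finset.sum_eq_zero fun p _ => Finset.sum_eq_zero fun i _ => ?_
    rw [hvanish p 0 (Or.inr rfl), MultilinearMap.zero_apply]
    ext x
    rw [MultilinearMap.smulRight_apply, MultilinearMap.zero_apply, zero_smul,
      MultilinearMap.zero_apply]


end
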